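/- arXiv:2508.15282 — 2 statements merged into one kernel-verified Lean document; each statement's English description precedes it below -/
import Mathlib

section
/- The set of compact subsets A of ℝ whose Hausdorff dimension differs from their lower (Assouad) dimension is dense in the space of nonempty compact subsets of ℝ with the Hausdorff metric. -/
open MeasureTheory Metric Filter Topology

/-- Smallest number of sets of diameter at most `r` needed to cover `F`. -/
noncomputable def coverNum (F : Set ℝ) (r : ℝ) : ℕ :=
  sInf {n : ℕ | ∃ 𝒰 : Finset (Set ℝ), 𝒰.card = n ∧ (∀ U ∈ 𝒰, Metric.diam U ≤ r) ∧
    F ⊆ ⋃ U ∈ 𝒰, (U : Set ℝ)}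

/-- Lower (Assouad) dimension of a set `E ⊆ ℝ`. -/
noncomputable def lowerDimSet (E : Set ℝ) : ℝ :=
  sSup {β : ℝ | 0 ≤ β ∧ ∃ M : ℝ, 0 < M ∧ ∀ x ∈ E, ∀ R r : ℝ, 0 < r → r < R →
    R ≤ Metric.diam E →
    M * (R / r) ^ β ≤ (coverNum (Metric.closedBall x R ∩ E) r : ℝ)}

/-- Topological support of a measure. -/
def msupport {X : Type*} [MetricSpace X] [MeasurableSpace X] (μ : Measure X) : Set X :=
  {x | ∀ ε : ℝ, 0 < ε → 0 < μ (Metric.ball x ε)}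

/-- Lower (Assouad) dimension of a measure. -/
noncomputable def lowerDimMeas {X : Type*} [MetricSpace X] [MeasurableSpace X]
    (μ : Measure X) : ℝ :=
  sSup {β : ℝ | 0 ≤ β ∧ ∃ M : ℝ, 0 < M ∧ ∀ x ∈ msupport μ, ∀ R r : ℝ, 0 < r → r < R →
    R ≤ Metric.diam (msupport μ) →
    ENNReal.ofReal (M * (R / r) ^ β) ≤
      μ (Metric.closedBall x R) / μ (Metric.closedBall x r)}

/-- `n`-th quantization error of order `r` of a measure. -/
noncomputable def quantErr {X : Type*} [MetricSpace X] [MeasurableSpace X]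
    (μ : Measure X) (n : ℕ) (r : ℝ) : ℝ :=
  sInf {v : ℝ | ∃ A : Finset X, A.Nonempty ∧ A.card ≤ n ∧
    v = ∫ x, Metric.infDist x (A : Set X) ^ r ∂μ}

/-- The quantization dimension of order `r` of `μ` exists and equals `D`. -/
noncomputable def HasQDim {X : Type*} [MetricSpace X] [MeasurableSpace X]
    (μ : Measure X) (r D : ℝ) : Prop :=
  Filter.Tendsto (fun n : ℕ => r * Real.log n / (- Real.log (quantErr μ n r)))
    Filter.atTop (nhds D)

/-- Convolution of measures: pushforward of the product under addition. -/
noncomputable def mconv {E : Type*} [MeasurableSpace E] [Add E] (μ ν : Measure E) : Measure E :=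
  Measure.map (fun p : E × E => p.1 + p.2) (μ.prod ν)

/-
Given a nonempty compact `K ⊆ ℝ` with minimum `a`, the compact set
`K ∪ {a - δ} ∪ [a, a + δ]` is within Hausdorff distance `δ` of `K`. It contains an interval, so
its Hausdorff dimension is `1`; and `a - δ` is an isolated point, so small balls around it need
a single covering set at every scale, which forces the lower dimension to be `0`.
-/

open Set

lemma coverNum_le_one_of_subset_singleton {F : Set ℝ} {p r : ℝ} (hF : F ⊆ {p}) (hr : 0 ≤ r) :
    coverNum F r ≤ 1 :=
  Nat.sInf_le ⟨{{p}}, Finset.card_singleton _, by simpa using hr, by simpa using hF⟩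

lemma nonpos_of_forall_mul_rpow_le_one {β M : ℝ} (hM : 0 < M)
    (h : ∀ x : ℝ, 1 < x → M * x ^ β ≤ 1) : β ≤ 0 := by
  by_contra! hβ
  obtain ⟨x, hx_big, hx_one⟩ := ((((tendsto_rpow_atTop hβ).const_mul_atTop hM).eventually_gt_atTop
    1).and (eventually_gt_atTop 1)).exists
  exact (h x hx_one).not_gt hx_big

lemma lowerDimSet_eq_zero_of_isolated {E : Set ℝ} {p R : ℝ} (hp : p ∈ E) (hR : 0 < R)
    (hiso : closedBall p R ∩ E ⊆ {p}) (hdiam : R ≤ diam E) : lowerDimSet E = 0 := by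
  refine le_antisymm (Real.sSup_nonpos ?_) (Real.sSup_nonneg fun β hβ => hβ.1)
  rintro β ⟨-, M, hM, hcov⟩
  refine nonpos_of_forall_mul_rpow_le_one hM fun x hx => ?_
  have hr : 0 < R / x := div_pos hR (one_pos.trans hx)
  calc M * x ^ β = M * (R / (R / x)) ^ β := by rw [div_div_cancel₀ hR.ne']
    _ ≤ coverNum (closedBall p R ∩ E) (R / x) :=
      hcov p hp R (R / x) hr (div_lt_self hR hx) hdiam
    _ ≤ 1 := by exact_mod_cast coverNum_le_one_of_subset_singleton hiso hr.le

lemma lowerDimSet_insert_eq_zero {S : Set ℝ} {a p : ℝ} (ha : a ∈ S) (hS : S ⊆ Ici a)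
    (hb : Bornology.IsBounded S) (hpa : p < a) : lowerDimSet (insert p S) = 0 := by
  refine lowerDimSet_eq_zero_of_isolated (mem_insert p S) (half_pos (sub_pos.2 hpa)) ?_ ?_
  · rintro q ⟨hq, rfl | hqS⟩
    · rfl
    · rw [mem_closedBall, Real.dist_eq, abs_le] at hq
      linarith [hq.2, mem_Ici.1 (hS hqS)]
  · calc (a - p) / 2 ≤ dist p a := by rw [Real.dist_eq, abs_of_neg (by linarith)]; linarith
      _ ≤ diam (insert p S) :=
        dist_le_diam_of_mem (hb.insert p) (mem_insert p S) (mem_insert_of_mem p ha)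

lemma hausdorffDist_union_le_of_subset_closedBall {X : Type*} [PseudoMetricSpace X]
    {A B : Set X} {a : X} {δ : ℝ} (ha : a ∈ A) (hB : B ⊆ closedBall a δ) (hδ : 0 ≤ δ) :
    hausdorffDist (A ∪ B) A ≤ δ := by
  refine hausdorffDist_le_of_mem_dist hδ ?_ fun x hx => ⟨x, subset_union_left hx, by simpa⟩
  rintro x (hx | hx)
  · exact ⟨x, hx, by simpa⟩
  · exact ⟨a, ha, hB hx⟩

lemma Real.dimH_eq_one_of_Ioo_subset {s : Set ℝ} {a b : ℝ} (hab : a < b) (hs : Ioo a b ⊆ s) :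
    dimH s = 1 := by
  simpa using Real.dimH_of_nonempty_interior
    ((nonempty_Ioo.2 hab).mono (isOpen_Ioo.subset_interior_iff.2 hs))

/-- Compact subsets of `ℝ` whose Hausdorff dimension differs from their lower dimension
are dense in the space of nonempty compact subsets of `ℝ` with the Hausdorff metric. -/
theorem dimH_ne_lowerDim_dense :
    Dense {K : TopologicalSpace.NonemptyCompacts ℝ |
      dimH (K : Set ℝ) ≠ ENNReal.ofReal (lowerDimSet (K : Set ℝ))} := by
  rw [Metric.dense_iff]
  intro K ε hε
  obtain ⟨a, haK, ha_le⟩ := K.isCompact.exists_isLeast K.nonempty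
  set δ := ε / 2
  have hδ : 0 < δ := half_pos hε
  set I : Set ℝ := Icc a (a + δ)
  let K' : TopologicalSpace.NonemptyCompacts ℝ :=
    ⟨⟨K ∪ insert (a - δ) I, K.isCompact.union (isCompact_Icc.insert _)⟩,
      K.nonempty.mono subset_union_left⟩
  have hI_ball : insert (a - δ) I ⊆ closedBall a δ := by
    rintro x (rfl | ⟨hax, hxa⟩)
    · simp [abs_of_pos hδ]
    · rw [mem_closedBall, Real.dist_eq, abs_le]
      constructor <;> linarith
  have hdimH : dimH (K' : Set ℝ) = 1 := Real.dimH_eq_one_of_Ioo_subset (lt_add_of_pos_right a hδ)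
    fun x hx => subset_union_right (mem_insert_of_mem _ (Ioo_subset_Icc_self hx))
  have hlower : lowerDimSet (K' : Set ℝ) = 0 := by
    change lowerDimSet (K ∪ insert (a - δ) I) = 0
    rw [union_insert]
    exact lowerDimSet_insert_eq_zero (subset_union_left haK)
      (union_subset ha_le fun x hx => hx.1) (K.isCompact.union isCompact_Icc).isBounded
      (sub_lt_self a hδ)
  refine ⟨K', ?_, by simp [hdimH, hlower]⟩
  rw [mem_ball, NonemptyCompacts.dist_eq]
  exact (hausdorffDist_union_le_of_subset_closedBall haK hI_ball hδ.le).trans_lt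
    (half_lt_self hε)
end

section
/- Let ϑ be a finite Borel measure on ℝ^m whose quantization dimension of order r exists, and let θ = Σ_{i=1}^k a_i δ_{x_i} be a finite convex combination of Dirac measures on ℝ^m. Then D_r(ϑ * θ) = D_r(ϑ). -/
open MeasureTheory Metric Filter Topology

/-!
Convolving with `θ = ∑ aᵢ δ_{xᵢ}` turns `ϑ` into the mixture `ν = ∑ aᵢ ϑ(· - xᵢ)` of its
translates. Let `e_n` be the `n`-th quantization error. A set `A` quantizes `ν` at the average cost
of quantizing `ϑ` by the translates `A - xᵢ`, so `e_n(ϑ) ≤ e_n(ν)`; and the set `A + {x₁, …, x_k}`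
of at most `n k` points quantizes every translate of `ϑ` as well as `A` quantizes `ϑ`, so
`e_{nk}(ν) ≤ e_n(ϑ)`. Hence `e_n(ϑ) ≤ e_n(ν) ≤ e_{⌊n/k⌋}(ϑ)`, and since `log ⌊n/k⌋ ~ log n` the
ratios `r log n / (-log e_n)` of `ν` and `ϑ` have the same limit.
-/

open Real Set Asymptotics

lemma monotoneOn_inv_neg_log_Ioo : MonotoneOn (fun t : ℝ => (-log t)⁻¹) (Ioo 0 1) := by
  intro s hs t ht hst
  have hlog := log_le_log hs.1 hst
  have hneg := log_neg ht.1 ht.2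
  dsimp only
  gcongr
  linarith

lemma monotoneOn_inv_neg_log_Ioi : MonotoneOn (fun t : ℝ => (-log t)⁻¹) (Ioi 1) := by
  intro s (hs : 1 < s) t _ hst
  have hlog := log_le_log (by linarith) hst
  have hpos := log_pos hs
  simp only [inv_neg, neg_le_neg_iff]
  gcongr

lemma isEquivalent_log_nat_div {k : ℕ} (hk : k ≠ 0) :
    (fun n : ℕ => log (n / k : ℕ)) ~[atTop] fun n => log n := by
  have hdiv : Tendsto (fun n : ℕ => (n : ℝ) / k) atTop atTop :=
    tendsto_natCast_atTop_atTop.atTop_div_const (by positivity)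
  have hfloor : (fun n : ℕ => ((n / k : ℕ) : ℝ)) ~[atTop] fun n => (n : ℝ) / k := by
    refine isEquivalent_of_tendsto_one ?_
    simpa [Function.comp_def, Nat.floor_div_eq_div, Pi.div_def] using
      tendsto_nat_floor_div_atTop.comp hdiv
  have hlogk : (fun n : ℕ => log ((n : ℝ) / k)) ~[atTop] fun n => log n := by
    refine IsLittleO.isEquivalent ?_
    have : (fun n : ℕ => log ((n : ℝ) / k) - log n) =ᶠ[atTop] fun _ => -log k := by
      filter_upwards [eventually_ne_atTop 0] with n hn
      rw [log_div (by exact_mod_cast hn) (by exact_mod_cast hk)]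
      ring
    refine (isLittleO_congr this EventuallyEq.rfl).2 ?_
    exact (isLittleO_const_left.2 <| Or.inr <|
      tendsto_abs_atTop_atTop.comp (tendsto_log_atTop.comp tendsto_natCast_atTop_atTop))
  exact (hfloor.log hdiv).trans hlogk

/-- `S` is `Ioo 0 1`, `Ioi 1` or a singleton: because of the junk value `log 1 = 0`,
`t ↦ (-log t)⁻¹` is not monotone across `1`. -/
lemma eventually_mem_monotoneOn_inv_neg_log {e : ℕ → ℝ} (he0 : ∀ n, 0 ≤ e n)
    (he : AntitoneOn e (Ici 1)) {g : ℕ → ℕ} (hg : Tendsto g atTop atTop) (hgle : ∀ n, g n ≤ n) :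
    ∀ᶠ n in atTop, ∃ S : Set ℝ, S.OrdConnected ∧ MonotoneOn (fun t : ℝ => (-log t)⁻¹) S ∧
      e n ∈ S ∧ e (g n) ∈ S := by
  have hle : ∀ N, 1 ≤ N → ∀ᶠ n in atTop, N ≤ g n ∧ e n ≤ e (g n) ∧ e (g n) ≤ e N := by
    intro N hN
    filter_upwards [hg.eventually_ge_atTop N] with n hn
    exact ⟨hn, he (mem_Ici.2 (hN.trans hn)) (mem_Ici.2 (hN.trans (hn.trans (hgle n))))
      (hgle n), he (mem_Ici.2 hN) (mem_Ici.2 (hN.trans hn)) hn⟩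
  by_cases hmin : ∃ N, 1 ≤ N ∧ ∀ n, 1 ≤ n → e N ≤ e n
  · obtain ⟨N, hN, hmin⟩ := hmin
    filter_upwards [hle N hN] with n ⟨hn, hen, heN⟩
    have hgn : e (g n) = e n := le_antisymm (heN.trans (hmin n (hN.trans (hn.trans (hgle n)))))
      hen
    exact ⟨{e n}, ordConnected_singleton, subsingleton_singleton.monotoneOn _, rfl, hgn⟩
  push Not at hmin
  have hpos : ∀ n, 1 ≤ n → 0 < e n := fun n hn => by
    obtain ⟨m, -, hm⟩ := hmin n hn
    exact (he0 m).trans_lt hm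
  by_cases hone : ∃ M, 1 ≤ M ∧ e M ≤ 1
  · obtain ⟨M, hM, hM1⟩ := hone
    obtain ⟨M', hM', hM'M⟩ := hmin M hM
    filter_upwards [hle M' hM', eventually_ge_atTop 1] with n ⟨_, hen, heM'⟩ hn
    exact ⟨Ioo 0 1, ordConnected_Ioo, monotoneOn_inv_neg_log_Ioo,
      ⟨hpos n hn, by linarith⟩, ⟨(hpos n hn).trans_le hen, by linarith⟩⟩
  · push Not at hone
    filter_upwards [hle 1 le_rfl] with n ⟨hn, _, _⟩
    exact ⟨Ioi 1, ordConnected_Ioi, monotoneOn_inv_neg_log_Ioi,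
      hone n (hn.trans (hgle n)), hone (g n) hn⟩

lemma tendsto_mul_log_div_neg_log_of_le_of_le {c D : ℝ} (hc : 0 ≤ c) {k : ℕ} (hk : k ≠ 0)
    {e f : ℕ → ℝ} (he0 : ∀ n, 0 ≤ e n) (he : AntitoneOn e (Ici 1)) (hf : AntitoneOn f (Ici 1))
    (hef : ∀ n, 1 ≤ n → e n ≤ f n) (hfe : ∀ n, 1 ≤ n → f (n * k) ≤ e n)
    (hlim : Tendsto (fun n : ℕ => c * log n / -log (e n)) atTop (𝓝 D)) :
    Tendsto (fun n : ℕ => c * log n / -log (f n)) atTop (𝓝 D) := by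
  have hdiv : Tendsto (· / k) atTop atTop := Nat.tendsto_div_const_atTop hk
  have hupper : Tendsto (fun n : ℕ => c * log n / -log (e (n / k))) atTop (𝓝 D) :=
    ((IsEquivalent.refl.mul (isEquivalent_log_nat_div hk)).div IsEquivalent.refl).tendsto_nhds
      (hlim.comp hdiv)
  have hmono : ∀ᶠ n : ℕ in atTop, (-log (e n))⁻¹ ≤ (-log (f n))⁻¹ ∧
      (-log (f n))⁻¹ ≤ (-log (e (n / k)))⁻¹ := by
    filter_upwards [eventually_mem_monotoneOn_inv_neg_log he0 he hdiv (Nat.div_le_self · k),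
      eventually_ge_atTop k] with n ⟨S, hS, hmonoS, hen, hek⟩ hn
    have hnk : 1 ≤ n / k := (Nat.one_le_div_iff (Nat.pos_of_ne_zero hk)).2 hn
    have hn1 : 1 ≤ n := hnk.trans (Nat.div_le_self n k)
    have hfn : f n ≤ e (n / k) := (hf (mem_Ici.2 (Nat.mul_pos hnk (Nat.pos_of_ne_zero hk)))
      (mem_Ici.2 hn1) (Nat.div_mul_le_self n k)).trans (hfe _ hnk)
    have hefn : e n ≤ f n := hef n hn1
    have hfS : f n ∈ S := hS.out hen hek ⟨hefn, hfn⟩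
    exact ⟨hmonoS hen hfS hefn, hmonoS hfS hek hfn⟩
  have hlog : ∀ n : ℕ, 0 ≤ c * log n := fun n => mul_nonneg hc (log_natCast_nonneg n)
  refine tendsto_of_tendsto_of_tendsto_of_le_of_le' hlim hupper ?_ ?_
  · filter_upwards [hmono] with n hn
    simpa only [div_eq_mul_inv] using mul_le_mul_of_nonneg_left hn.1 (hlog n)
  · filter_upwards [hmono] with n hn
    simpa only [div_eq_mul_inv] using mul_le_mul_of_nonneg_left hn.2 (hlog n)

lemma add_rpow_le_two_rpow_mul_add_rpow {s t r : ℝ} (hs : 0 ≤ s) (ht : 0 ≤ t) (hr : 0 ≤ r) :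
    (s + t) ^ r ≤ 2 ^ r * (s ^ r + t ^ r) := by
  calc (s + t) ^ r ≤ (2 * max s t) ^ r := by
        gcongr
        linarith [le_max_left s t, le_max_right s t]
    _ = 2 ^ r * max (s ^ r) (t ^ r) := by
        rw [mul_rpow zero_le_two (le_max_of_le_left hs),
          (monotoneOn_rpow_Ici_of_exponent_nonneg hr).map_max hs ht]
    _ ≤ 2 ^ r * (s ^ r + t ^ r) := by
        gcongr
        exact max_le_add_of_nonneg (rpow_nonneg hs r) (rpow_nonneg ht r)

section Integrable

variable {X : Type*} [MeasurableSpace X] {μ : Measure X} [IsFiniteMeasure μ] {r : ℝ}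

lemma MeasureTheory.Integrable.rpow_of_le_add_const {f g : X → ℝ} {C : ℝ} (hr : 0 ≤ r)
    (hC : 0 ≤ C) (hf : AEStronglyMeasurable (fun y => f y ^ r) μ) (hf0 : ∀ y, 0 ≤ f y)
    (hg0 : ∀ y, 0 ≤ g y) (hfg : ∀ y, f y ≤ g y + C) (hg : Integrable (fun y => g y ^ r) μ) :
    Integrable (fun y => f y ^ r) μ := by
  refine ((hg.add (integrable_const (C ^ r))).const_mul (2 ^ r)).mono' hf
    (Eventually.of_forall fun y => ?_)
  rw [norm_of_nonneg (rpow_nonneg (hf0 y) r)]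
  exact (rpow_le_rpow (hf0 y) (hfg y) hr).trans
    (add_rpow_le_two_rpow_mul_add_rpow (hg0 y) hC hr)

end Integrable

section PseudoMetricSpace

variable {X : Type*} [PseudoMetricSpace X] {r : ℝ}

open Bornology

lemma continuous_infDist_rpow (hr : 0 ≤ r) (A : Set X) : Continuous fun y => infDist y A ^ r :=
  (continuous_infDist_pt A).rpow_const fun _ => Or.inr hr

variable [MeasurableSpace X] [OpensMeasurableSpace X] {μ : Measure X} [IsFiniteMeasure μ]

lemma integrable_infDist_rpow_of_integrable (hr : 0 ≤ r) {A B : Set X} (hA : A.Nonempty)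
    (hAb : IsBounded A) (hB : B.Nonempty) (hBb : IsBounded B)
    (h : Integrable (fun y => infDist y B ^ r) μ) : Integrable (fun y => infDist y A ^ r) μ :=
  h.rpow_of_le_add_const hr hausdorffDist_nonneg
    (continuous_infDist_rpow hr A).aestronglyMeasurable (fun _ => infDist_nonneg)
    (fun _ => infDist_nonneg)
    (fun _ => infDist_le_infDist_add_hausdorffDist
      (hausdorffEDist_ne_top_of_nonempty_of_bounded hB hA hBb hAb))

lemma integral_infDist_rpow_le_of_subset (hr : 0 ≤ r) {A B : Set X} (hAB : A ⊆ B)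
    (hA : A.Nonempty) (hB : IsBounded B) :
    ∫ y, infDist y B ^ r ∂μ ≤ ∫ y, infDist y A ^ r ∂μ := by
  by_cases hint : Integrable (fun y => infDist y A ^ r) μ
  · exact integral_mono_of_nonneg (Eventually.of_forall fun _ => rpow_nonneg infDist_nonneg r)
      hint (Eventually.of_forall fun _ =>
        rpow_le_rpow infDist_nonneg (infDist_le_infDist_of_subset hAB hA) hr)
  · rw [integral_undef hint, integral_undef fun hB' => hint <|
      integrable_infDist_rpow_of_integrable hr hA (hB.subset hAB) (hA.mono hAB) hB hB']

end PseudoMetricSpace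

section Translate

variable {X : Type*} [SeminormedAddCommGroup X] [MeasurableSpace X] [BorelSpace X] {r : ℝ}

lemma integral_infDist_rpow_map_add (μ : Measure X) (c : X) (A : Set X) :
    ∫ y, infDist y ((· + c) '' A) ^ r ∂μ.map (· + c) = ∫ y, infDist y A ^ r ∂μ := by
  rw [(measurableEmbedding_addRight c).integral_map]
  simp_rw [infDist_image (isometry_add_right c)]

variable {μ : Measure X} [IsFiniteMeasure μ]

lemma integrable_infDist_add_rpow_iff (hr : 0 ≤ r) (A : Set X) (c : X) :
    Integrable (fun y => infDist (y + c) A ^ r) μ ↔ Integrable (fun y => infDist y A ^ r) μ := by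
  have hmeas (d : X) : AEStronglyMeasurable (fun y => infDist (y + d) A ^ r) μ :=
    ((continuous_infDist_rpow hr A).comp (continuous_add_const d)).aestronglyMeasurable
  constructor
  · refine fun h => h.rpow_of_le_add_const hr (norm_nonneg c) (by simpa using hmeas 0)
      (fun _ => infDist_nonneg) (fun _ => infDist_nonneg) fun y => ?_
    simpa using infDist_le_infDist_add_dist (s := A) (x := y) (y := y + c)
  · refine fun h => h.rpow_of_le_add_const hr (norm_nonneg c) (hmeas c)
      (fun _ => infDist_nonneg) (fun _ => infDist_nonneg) fun y => ?_
    simpa using infDist_le_infDist_add_dist (s := A) (x := y + c) (y := y)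

lemma integrable_infDist_rpow_map_add_iff (hr : 0 ≤ r) (A : Set X) (c : X) :
    Integrable (fun y => infDist y A ^ r) (μ.map (· + c)) ↔
      Integrable (fun y => infDist y A ^ r) μ :=
  (measurableEmbedding_addRight c).integrable_map_iff.trans
    (integrable_infDist_add_rpow_iff hr A c)

lemma integral_infDist_rpow_sum_map_add {ι : Type*} [Fintype ι] (hr : 0 ≤ r)
    {a : ι → ENNReal} (ha : ∑ i, a i = 1) (x : ι → X) (A : Set X) :
    ∫ y, infDist y A ^ r ∂(∑ i, a i • μ.map (· + x i)) =
      ∑ i, (a i).toReal * ∫ y, infDist y A ^ r ∂μ.map (· + x i) := by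
  have hfin (i : ι) : a i ≠ ⊤ :=
    ENNReal.sum_ne_top.1 (ha ▸ ENNReal.one_ne_top) i (Finset.mem_univ i)
  -- `d(·, A) ^ r` is integrable for every translate of `μ` or for none, so the junk value
  -- `0` of the integral of a non-integrable function occurs on both sides at once
  by_cases h : Integrable (fun y => infDist y A ^ r) μ
  · rw [integral_finsetSum_measure fun i _ =>
      ((integrable_infDist_rpow_map_add_iff hr A (x i)).2 h).smul_measure (hfin i)]
    simp_rw [integral_smul_measure, smul_eq_mul]
  · obtain ⟨j, -, hj⟩ := Finset.exists_ne_zero_of_sum_ne_zero (ha ▸ one_ne_zero)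
    have hsum : ¬ Integrable (fun y => infDist y A ^ r) (∑ i, a i • μ.map (· + x i)) := by
      rw [integrable_finsetSum_measure]
      exact fun hall => h <| (integrable_infDist_rpow_map_add_iff hr A (x j)).1 <|
        (integrable_smul_measure hj (hfin j)).1 (hall j (Finset.mem_univ j))
    rw [integral_undef hsum, Finset.sum_eq_zero fun i _ => by
      rw [integral_undef (mt (integrable_infDist_rpow_map_add_iff hr A (x i)).1 h), mul_zero]]

end Translate

section QuantErr

variable {X : Type*} [MetricSpace X] [MeasurableSpace X] {μ : Measure X} {r : ℝ}

variable (μ r) in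
lemma quantErr_nonneg (n : ℕ) : 0 ≤ quantErr μ n r :=
  Real.sInf_nonneg <| by
    rintro v ⟨A, -, -, rfl⟩
    exact integral_nonneg fun _ => rpow_nonneg infDist_nonneg r

lemma quantErr_le_integral {n : ℕ} {A : Finset X} (hA : A.Nonempty) (hAn : A.card ≤ n) :
    quantErr μ n r ≤ ∫ y, infDist y (A : Set X) ^ r ∂μ :=
  csInf_le ⟨0, by
    rintro v ⟨B, -, -, rfl⟩
    exact integral_nonneg fun _ => rpow_nonneg infDist_nonneg r⟩ ⟨A, hA, hAn, rfl⟩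

lemma le_quantErr [Nonempty X] {n : ℕ} (hn : 1 ≤ n) {c : ℝ}
    (h : ∀ A : Finset X, A.Nonempty → A.card ≤ n → c ≤ ∫ y, infDist y (A : Set X) ^ r ∂μ) :
    c ≤ quantErr μ n r :=
  le_csInf ⟨_, {Classical.arbitrary X}, Finset.singleton_nonempty _, hn, rfl⟩ <| by
    rintro v ⟨A, hA, hAn, rfl⟩
    exact h A hA hAn

variable (μ r) in
lemma quantErr_antitoneOn [Nonempty X] :
    AntitoneOn (quantErr μ · r) (Set.Ici 1) := fun _ hm _ _ hmn =>
  le_quantErr hm fun _ hA hAm => quantErr_le_integral hA (hAm.trans hmn)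

end QuantErr

lemma mconv_dirac {E : Type*} [MeasurableSpace E] [Add E] [MeasurableAdd₂ E] (μ : Measure E)
    [SFinite μ] (c : E) : mconv μ (Measure.dirac c) = μ.map (· + c) := by
  rw [mconv, Measure.prod_dirac, Measure.map_map measurable_add measurable_prodMk_right]
  rfl

lemma mconv_finset_sum_smul_dirac {E ι : Type*} [MeasurableSpace E] [Add E] [MeasurableAdd₂ E]
    (μ : Measure E) [SFinite μ] (a : ι → ENNReal) (x : ι → E) (s : Finset ι) :
    mconv μ (∑ i ∈ s, a i • Measure.dirac (x i)) = ∑ i ∈ s, a i • μ.map (· + x i) := by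
  classical
  induction s using Finset.induction_on with
  | empty => simp [mconv]
  | insert j s hj ih =>
    have : SFinite (∑ i ∈ s, a i • Measure.dirac (x i)) := by
      rw [← Finset.sum_coe_sort, ← Measure.sum_fintype]
      infer_instance
    rw [Finset.sum_insert hj, Finset.sum_insert hj, ← ih, ← mconv_dirac, mconv, mconv, mconv,
      Measure.prod_add, Measure.prod_smul_right, Measure.map_add _ _ measurable_add,
      Measure.map_smul]

lemma ENNReal.sum_toReal_eq_one {ι : Type*} [Fintype ι] {a : ι → ENNReal} (ha : ∑ i, a i = 1) :
    ∑ i, (a i).toReal = 1 := by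
  rw [← ENNReal.toReal_sum fun i _ => ENNReal.sum_ne_top.1 (ha ▸ ENNReal.one_ne_top) i
    (Finset.mem_univ i), ha, ENNReal.toReal_one]

section Conv

variable {X : Type*} [NormedAddCommGroup X] [MeasurableSpace X] [BorelSpace X]
  [SecondCountableTopology X] {ϑ : Measure X} [IsFiniteMeasure ϑ] {ι : Type*} [Fintype ι]
  {a : ι → ENNReal} {x : ι → X} {r : ℝ}

open scoped Pointwise

lemma quantErr_le_quantErr_mconv (hr : 0 ≤ r) (ha : ∑ i, a i = 1) {n : ℕ} (hn : 1 ≤ n) :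
    quantErr ϑ n r ≤ quantErr (mconv ϑ (∑ i, a i • Measure.dirac (x i))) n r := by
  classical
  rw [mconv_finset_sum_smul_dirac]
  refine le_quantErr hn fun A hA hAn => ?_
  rw [integral_infDist_rpow_sum_map_add hr ha]
  calc quantErr ϑ n r = ∑ i, (a i).toReal * quantErr ϑ n r := by
        rw [← Finset.sum_mul, ENNReal.sum_toReal_eq_one ha, one_mul]
    _ ≤ ∑ i, (a i).toReal * ∫ y, infDist y (A : Set X) ^ r ∂ϑ.map (· + x i) := by
        gcongr with i
        have hA' : A = (A.image (· - x i)).image (· + x i) := by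
          simp [Finset.image_image, Function.comp_def]
        rw [hA', Finset.coe_image, integral_infDist_rpow_map_add]
        exact quantErr_le_integral (hA.image _) (Finset.card_image_le.trans hAn)

lemma quantErr_mconv_le (hr : 0 ≤ r) (ha : ∑ i, a i = 1) {n : ℕ} (hn : 1 ≤ n) :
    quantErr (mconv ϑ (∑ i, a i • Measure.dirac (x i))) (n * Fintype.card ι) r ≤
      quantErr ϑ n r := by
  classical
  rw [mconv_finset_sum_smul_dirac]
  refine le_quantErr hn fun A hA hAn => ?_
  obtain ⟨j, -, -⟩ := Finset.exists_ne_zero_of_sum_ne_zero (ha ▸ one_ne_zero)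
  set B := A + Finset.univ.image x
  have hB : B.Nonempty := hA.add (Finset.Nonempty.image ⟨j, Finset.mem_univ j⟩ x)
  have hBn : B.card ≤ n * Fintype.card ι :=
    Finset.card_add_le.trans (Nat.mul_le_mul hAn Finset.card_image_le)
  calc quantErr (∑ i, a i • ϑ.map (· + x i)) (n * Fintype.card ι) r
      ≤ ∑ i, (a i).toReal * ∫ y, infDist y (B : Set X) ^ r ∂ϑ.map (· + x i) := by
        rw [← integral_infDist_rpow_sum_map_add hr ha]
        exact quantErr_le_integral hB hBn
    _ ≤ ∑ i, (a i).toReal *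
          ∫ y, infDist y ((· + x i) '' (A : Set X)) ^ r ∂ϑ.map (· + x i) := by
        refine Finset.sum_le_sum fun i _ => mul_le_mul_of_nonneg_left ?_ ENNReal.toReal_nonneg
        refine integral_infDist_rpow_le_of_subset hr ?_ ((Finset.coe_nonempty.2 hA).image _)
          B.finite_toSet.isBounded
        rintro _ ⟨y, hy, rfl⟩
        exact Finset.add_mem_add hy (Finset.mem_image_of_mem x (Finset.mem_univ i))
    _ = ∫ y, infDist y (A : Set X) ^ r ∂ϑ := by
        simp_rw [integral_infDist_rpow_map_add, ← Finset.sum_mul, ENNReal.sum_toReal_eq_one ha,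
          one_mul]

end Conv

theorem qdim_conv_dirac_general (m : ℕ) (ϑ : Measure (EuclideanSpace ℝ (Fin m)))
    [IsFiniteMeasure ϑ] (r D : ℝ) (hr : 0 < r) (hϑ : HasQDim ϑ r D)
    (k : ℕ) (a : Fin k → ENNReal) (x : Fin k → EuclideanSpace ℝ (Fin m))
    (ha1 : ∑ i, a i = 1) :
    HasQDim (mconv ϑ (∑ i, a i • MeasureTheory.Measure.dirac (x i))) r D := by
  obtain ⟨j, -, -⟩ := Finset.exists_ne_zero_of_sum_ne_zero (ha1 ▸ one_ne_zero)
  exact tendsto_mul_log_div_neg_log_of_le_of_le hr.le (Fintype.card_pos_iff.2 ⟨j⟩).ne'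
    (quantErr_nonneg ϑ r) (quantErr_antitoneOn ϑ r) (quantErr_antitoneOn _ r)
    (fun _ hn => quantErr_le_quantErr_mconv hr.le ha1 hn)
    (fun _ hn => quantErr_mconv_le hr.le ha1 hn) hϑ

/-- The quantization dimension of order `r` is invariant under convolution with a finite
convex combination of Dirac measures. -/
theorem qdim_conv_dirac (m : ℕ) (ϑ : Measure (EuclideanSpace ℝ (Fin m)))
    [IsFiniteMeasure ϑ] (r D : ℝ) (hr : 0 < r) (hϑ : HasQDim ϑ r D)
    (k : ℕ) (hk : 0 < k) (a : Fin k → ENNReal) (x : Fin k → EuclideanSpace ℝ (Fin m))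
    (ha : ∀ i, 0 < a i) (ha1 : ∑ i, a i = 1) :
    HasQDim (mconv ϑ (∑ i, a i • MeasureTheory.Measure.dirac (x i))) r D :=
  qdim_conv_dirac_general m ϑ r D hr hϑ k a x ha1
end
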